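/- arXiv:2012.10740 — 3 statements merged into one kernel-verified Lean document; each statement's English description precedes it below -/
import Mathlib

section
/- (Lemma 2.1, first part) For any real sequence w_1, …, w_n and every 1 ≤ k ≤ n, the L1_R kernels satisfy 2 w_k ∑_{j=1}^{k} a_{k−j}^{(k)} w_j ≥ w_k² ∑_{j=1}^{k} a_{k−j}^{(k)} + ∑_{j=1}^{k} q_{k−j}^{(k)} w_j² − ∑_{j=1}^{k−1} q_{k−j−1}^{(k−1)} w_j². -/
open Finset intervalIntegral Matrix

noncomputable def omegaK (μ s : ℝ) : ℝ := s ^ (μ - 1) / Real.Gamma μ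

noncomputable def qK (α : ℝ) (t : ℕ → ℝ) (n k : ℕ) : ℝ :=
  ∫ s in (t (k - 1))..(t k), omegaK α (t n - s)

noncomputable def aK (α : ℝ) (t : ℕ → ℝ) (n k : ℕ) : ℝ :=
  if k = n then qK α t n n else qK α t n k - qK α t (n - 1) k

noncomputable def thetaAux (A : ℕ → ℕ → ℝ) (n : ℕ) : ℕ → ℕ → ℝ
  | 0, m => if m = 0 then 1 / A n n else 0
  | M + 1, m =>
      if m ≤ M then thetaAux A n M m
      else -(1 / A (n - (M + 1)) (n - (M + 1))) *
        ∑ ℓ ∈ Finset.range (M + 1), thetaAux A n M ℓ * A (n - ℓ) (n - (M + 1))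

noncomputable def thetaK (α : ℝ) (t : ℕ → ℝ) (n k : ℕ) : ℝ :=
  thetaAux (aK α t) n (n - k) (n - k)

noncomputable def Hfun (a b : ℝ) : ℝ := a ^ 3 / 3 + a * b ^ 2 / 2 + b ^ 3 / 6 - (a + b) / 2

noncomputable def Ffun (u : ℝ) : ℝ := (1 - u ^ 2) ^ 2 / 4

noncomputable def zetaK (α : ℝ) (t : ℕ → ℝ) (n j : ℕ) : ℝ :=
  if j = n then thetaK α t n n else thetaK α t n j - thetaK α t n (j + 1)

/-!
For `j < k` the kernel `a_{k-j}^{(k)} = q_{k-j}^{(k)} - q_{k-j-1}^{(k-1)}` integrates the difference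
`ω_α(t_k - s) - ω_α(t_{k-1} - s) ≤ 0` over `[t_{j-1}, t_j]`, since `ω_α` is decreasing for `α ≤ 1`;
hence `a_{k-j}^{(k)} ≤ 0`. Subtracting the left-hand side from the right-hand side, the `j = k` terms
cancel and the remainder is `-∑_{j<k} a_{k-j}^{(k)} (w_k - w_j)² ≥ 0`.
-/

lemma omegaK_antitoneOn {α : ℝ} (hα0 : 0 < α) (hα1 : α ≤ 1) :
    AntitoneOn (omegaK α) (Set.Ioi 0) := fun _ hx _ _ hxy =>
  div_le_div_of_nonneg_right (Real.rpow_le_rpow_of_nonpos hx hxy (by linarith))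
    (Real.Gamma_pos_of_pos hα0).le

lemma intervalIntegrable_omegaK_sub {α : ℝ} (hα0 : 0 < α) (c a b : ℝ) :
    IntervalIntegrable (fun s => omegaK α (c - s)) MeasureTheory.volume a b := by
  have h := (intervalIntegrable_rpow' (r := α - 1) (a := c - a) (b := c - b)
    (by linarith)).comp_sub_left c
  simp only [sub_sub_cancel] at h
  exact h.div_const _

lemma integral_omegaK_sub_anti {α : ℝ} (hα0 : 0 < α) (hα1 : α ≤ 1) {a b c c' : ℝ}
    (hab : a ≤ b) (hbc : b ≤ c) (hcc' : c ≤ c') :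
    ∫ s in a..b, omegaK α (c' - s) ≤ ∫ s in a..b, omegaK α (c - s) :=
  integral_mono_on_of_le_Ioo hab (intervalIntegrable_omegaK_sub hα0 _ _ _)
    (intervalIntegrable_omegaK_sub hα0 _ _ _) fun s hs =>
      have hcs : 0 < c - s := sub_pos.2 (hs.2.trans_le hbc)
      omegaK_antitoneOn hα0 hα1 hcs (Set.mem_Ioi.2 (by linarith)) (by linarith)

lemma aK_nonpos {α : ℝ} (hα0 : 0 < α) (hα1 : α ≤ 1) {t : ℕ → ℝ} {m j : ℕ}
    (ht : MonotoneOn t (Set.Iic (m + 1))) (hj1 : 1 ≤ j) (hjm : j ≤ m) :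
    aK α t (m + 1) j ≤ 0 := by
  have hle (i i' : ℕ) (hii' : i ≤ i') (hi' : i' ≤ m + 1) : t i ≤ t i' :=
    ht (Set.mem_Iic.2 (hii'.trans hi')) (Set.mem_Iic.2 hi') hii'
  rw [aK, if_neg (by omega), sub_nonpos]
  exact integral_omegaK_sub_anti hα0 hα1 (hle _ _ (by omega) (by omega))
    (hle _ _ hjm (by omega)) (hle _ _ (by omega) le_rfl)

lemma sq_mul_sum_add_sum_mul_sq_le {ι : Type*} (s : Finset ι) (a w : ι → ℝ) (x : ℝ)
    (ha : ∀ j ∈ s, a j ≤ 0) :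
    x ^ 2 * ∑ j ∈ s, a j + ∑ j ∈ s, a j * w j ^ 2 ≤ 2 * x * ∑ j ∈ s, a j * w j := by
  have hsq : ∑ j ∈ s, a j * (x - w j) ^ 2 ≤ 0 :=
    sum_nonpos fun j hj => mul_nonpos_of_nonpos_of_nonneg (ha j hj) (sq_nonneg _)
  have hexpand : ∑ j ∈ s, a j * (x - w j) ^ 2
      = x ^ 2 * ∑ j ∈ s, a j + ∑ j ∈ s, a j * w j ^ 2 - 2 * x * ∑ j ∈ s, a j * w j := by
    simp only [mul_sum, ← sum_add_distrib, ← sum_sub_distrib]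
    exact sum_congr rfl fun j _ => by ring
  linarith

theorem stmt2_general (α : ℝ) (hα0 : 0 < α) (hα1 : α < 1)
    (N : ℕ) (t : ℕ → ℝ) (ht : ∀ k, k < N → t k < t (k + 1)) :
    ∀ n, n ≤ N → ∀ w : ℕ → ℝ, ∀ k, 1 ≤ k → k ≤ n →
      w k ^ 2 * (∑ j ∈ Finset.Icc 1 k, aK α t k j)
        + ∑ j ∈ Finset.Icc 1 k, qK α t k j * w j ^ 2
        - ∑ j ∈ Finset.Icc 1 (k - 1), qK α t (k - 1) j * w j ^ 2
      ≤ 2 * w k * ∑ j ∈ Finset.Icc 1 k, aK α t k j * w j := by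
  intro n hnN w k hk1 hkn
  obtain ⟨m, rfl⟩ : ∃ m, k = m + 1 := ⟨k - 1, by omega⟩
  have hmono : MonotoneOn t (Set.Iic (m + 1)) :=
    ((strictMonoOn_Iic_of_lt_succ ht).monotoneOn).mono (Set.Iic_subset_Iic.2 (by omega))
  have hq_sub : ∑ j ∈ Icc 1 m, qK α t (m + 1) j * w j ^ 2 - ∑ j ∈ Icc 1 m, qK α t m j * w j ^ 2
      = ∑ j ∈ Icc 1 m, aK α t (m + 1) j * w j ^ 2 := by
    rw [← sum_sub_distrib]
    refine sum_congr rfl fun j hj => ?_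
    rw [aK, if_neg (by simp at hj; omega), Nat.add_sub_cancel]
    ring
  have hbody := sq_mul_sum_add_sum_mul_sq_le (Icc 1 m) (aK α t (m + 1)) w (w (m + 1))
    fun j hj => aK_nonpos hα0 hα1.le hmono (mem_Icc.1 hj).1 (mem_Icc.1 hj).2
  have hdiag : aK α t (m + 1) (m + 1) = qK α t (m + 1) (m + 1) := if_pos rfl
  simp only [Nat.add_sub_cancel, sum_Icc_succ_top (by omega : 1 ≤ m + 1), hdiag]
  linear_combination hbody + hq_sub

theorem stmt2 (α : ℝ) (hα0 : 0 < α) (hα1 : α < 1)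
    (N : ℕ) (t : ℕ → ℝ) (ht0 : t 0 = 0) (ht : ∀ k, k < N → t k < t (k + 1)) :
    ∀ n, n ≤ N → ∀ w : ℕ → ℝ, ∀ k, 1 ≤ k → k ≤ n →
      w k ^ 2 * (∑ j ∈ Finset.Icc 1 k, aK α t k j)
        + ∑ j ∈ Finset.Icc 1 k, qK α t k j * w j ^ 2
        - ∑ j ∈ Finset.Icc 1 (k - 1), qK α t (k - 1) j * w j ^ 2
      ≤ 2 * w k * ∑ j ∈ Finset.Icc 1 k, aK α t k j * w j :=
  stmt2_general α hα0 hα1 N t ht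
end

section
/- (Lemma 3.2) For each fixed n with 2 ≤ n ≤ N, the DOC kernels satisfy θ_0^{(n)} = 1/ω_{1+α}(τ_n) and θ_0^{(n)} − θ_1^{(n)} > ω_α(r_n + 1) / ( ω_{1+α}(τ_n) · ω_{1+α}(1) ), where r_n := τ_n/τ_{n−1} is the adjoint step ratio. -/
open Finset intervalIntegral Matrix

/-!
The first two DOC kernels are explicit: `θ₀⁽ⁿ⁾ = 1/a₀⁽ⁿ⁾` and
`θ₁⁽ⁿ⁾ = -θ₀⁽ⁿ⁾ a₁⁽ⁿ⁾ / a₀⁽ⁿ⁻¹⁾`. Since `a₀⁽ⁿ⁻¹⁾ + a₁⁽ⁿ⁾ = q₁⁽ⁿ⁾` telescopes, this gives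
`θ₀⁽ⁿ⁾ - θ₁⁽ⁿ⁾ = θ₀⁽ⁿ⁾ q₁⁽ⁿ⁾ / q₀⁽ⁿ⁻¹⁾ = θ₀⁽ⁿ⁾ ((rₙ + 1)^α - rₙ^α)`, and strict concavity of
`x ↦ x^α` bounds `(rₙ + 1)^α - rₙ^α` from below by its derivative `α (rₙ + 1)^(α-1)` at the
right endpoint, which is `Γ(1+α) ω_α(rₙ + 1)`.
-/

lemma Real.mul_rpow_sub_one_mul_lt_rpow_sub_rpow {α x y : ℝ} (hα0 : 0 < α) (hα1 : α < 1)
    (hx : 0 ≤ x) (hxy : x < y) : α * y ^ (α - 1) * (y - x) < y ^ α - x ^ α := by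
  have hslope := (Real.strictConcaveOn_rpow hα0 hα1).lt_slope_of_hasDerivAt
    (Set.mem_Ici.2 hx) (Set.mem_Ici.2 (hx.trans hxy.le)) hxy
    (Real.hasDerivAt_rpow_const (Or.inl (hx.trans_lt hxy).ne'))
  rw [slope_def_field, lt_div_iff₀ (sub_pos.2 hxy)] at hslope
  exact hslope

lemma Real.Gamma_one_add {α : ℝ} (hα : 0 < α) : Real.Gamma (1 + α) = α * Real.Gamma α := by
  rw [add_comm, Real.Gamma_add_one hα.ne']

lemma omegaK_one_add (α s : ℝ) : omegaK (1 + α) s = s ^ α / Real.Gamma (1 + α) := by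
  rw [omegaK, add_sub_cancel_left]

lemma Gamma_one_add_mul_omegaK {α : ℝ} (hα : 0 < α) (s : ℝ) :
    Real.Gamma (1 + α) * omegaK α s = α * s ^ (α - 1) := by
  rw [omegaK, Real.Gamma_one_add hα]
  field_simp [(Real.Gamma_pos_of_pos hα).ne']

lemma integral_omegaK_sub {α : ℝ} (hα : 0 < α) (a b c : ℝ) :
    ∫ s in a..b, omegaK α (c - s) = ((c - a) ^ α - (c - b) ^ α) / Real.Gamma (1 + α) := by
  simp only [omegaK, intervalIntegral.integral_div]
  rw [intervalIntegral.integral_comp_sub_left (fun x => x ^ (α - 1)) c,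
    integral_rpow (Or.inl (by linarith)), sub_add_cancel, Real.Gamma_one_add hα, div_div]

section Kernels

variable {α : ℝ} {t : ℕ → ℝ} {n : ℕ}

lemma qK_self (hα : 0 < α) :
    qK α t n n = (t n - t (n - 1)) ^ α / Real.Gamma (1 + α) := by
  rw [qK, integral_omegaK_sub hα, sub_self, Real.zero_rpow hα.ne', sub_zero]

lemma qK_self_pos (hα : 0 < α) (hτ : 0 < t n - t (n - 1)) : 0 < qK α t n n := by
  rw [qK_self hα]
  exact div_pos (Real.rpow_pos_of_pos hτ α) (Real.Gamma_pos_of_pos (by linarith))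

lemma qK_pred (hα : 0 < α) :
    qK α t n (n - 1) =
      ((t n - t (n - 2)) ^ α - (t n - t (n - 1)) ^ α) / Real.Gamma (1 + α) := by
  rw [qK, integral_omegaK_sub hα, Nat.sub_sub]

lemma thetaK_self : thetaK α t n n = 1 / qK α t n n := by
  simp [thetaK, thetaAux, aK]

lemma thetaK_pred (hn : 1 ≤ n) :
    thetaK α t n (n - 1) =
      -(1 / qK α t (n - 1) (n - 1)) * (thetaK α t n n * aK α t n (n - 1)) := by
  rw [thetaK_self, thetaK, Nat.sub_sub_self hn]
  simp [thetaAux, aK]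

lemma thetaK_self_sub_thetaK_pred (hn : 1 ≤ n) (hq : qK α t (n - 1) (n - 1) ≠ 0) :
    thetaK α t n n - thetaK α t n (n - 1) =
      thetaK α t n n * (qK α t n (n - 1) / qK α t (n - 1) (n - 1)) := by
  rw [thetaK_pred hn, aK, if_neg (by omega)]
  field_simp
  ring

lemma qK_pred_div_qK_pred_self (hα : 0 < α) (hn : 2 ≤ n)
    (hτn : 0 ≤ t n - t (n - 1)) (hτn1 : 0 < t (n - 1) - t (n - 2)) :
    qK α t n (n - 1) / qK α t (n - 1) (n - 1) =
      ((t n - t (n - 1)) / (t (n - 1) - t (n - 2)) + 1) ^ α -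
        ((t n - t (n - 1)) / (t (n - 1) - t (n - 2))) ^ α := by
  have hsum : (t n - t (n - 1)) / (t (n - 1) - t (n - 2)) + 1 =
      (t n - t (n - 2)) / (t (n - 1) - t (n - 2)) := by
    field_simp
    ring
  rw [qK_pred hα, qK_self hα, show n - 1 - 1 = n - 2 by omega, hsum,
    Real.div_rpow (by linarith) hτn1.le, Real.div_rpow hτn hτn1.le,
    div_div_div_cancel_right₀ (Real.Gamma_pos_of_pos (by linarith)).ne', sub_div]

end Kernels

lemma sub_pred_pos_of_lt_succ {N : ℕ} {t : ℕ → ℝ} (ht : ∀ k, k < N → t k < t (k + 1))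
    {k : ℕ} (hk : 1 ≤ k) (hkN : k ≤ N) : 0 < t k - t (k - 1) := by
  have h := ht (k - 1) (by omega)
  rw [Nat.sub_add_cancel hk] at h
  exact sub_pos.2 h

theorem stmt5_general (α : ℝ) (hα0 : 0 < α) (hα1 : α < 1)
    (N : ℕ) (t : ℕ → ℝ) (ht : ∀ k, k < N → t k < t (k + 1)) :
    ∀ n, 2 ≤ n → n ≤ N →
      thetaK α t n n = 1 / omegaK (1 + α) (t n - t (n - 1)) ∧
      omegaK α ((t n - t (n - 1)) / (t (n - 1) - t (n - 2)) + 1)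
          / (omegaK (1 + α) (t n - t (n - 1)) * omegaK (1 + α) 1)
        < thetaK α t n n - thetaK α t n (n - 1) := by
  intro n h2 hN
  have hτn := sub_pred_pos_of_lt_succ ht (by omega) hN
  have hτn1 := sub_pred_pos_of_lt_succ ht (k := n - 1) (by omega) (by omega)
  rw [show n - 1 - 1 = n - 2 by omega] at hτn1
  have hθ₀ : thetaK α t n n = 1 / omegaK (1 + α) (t n - t (n - 1)) := by
    rw [thetaK_self, qK_self hα0, omegaK_one_add]
  refine ⟨hθ₀, ?_⟩
  have hθ₀_pos : 0 < thetaK α t n n := by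
    rw [thetaK_self]
    exact one_div_pos.2 (qK_self_pos hα0 hτn)
  have hq : qK α t (n - 1) (n - 1) ≠ 0 :=
    (qK_self_pos hα0 (by rwa [show n - 1 - 1 = n - 2 by omega])).ne'
  set r := (t n - t (n - 1)) / (t (n - 1) - t (n - 2))
  have hconcave := Real.mul_rpow_sub_one_mul_lt_rpow_sub_rpow hα0 hα1
    (div_pos hτn hτn1).le (lt_add_one r)
  rw [add_sub_cancel_left, mul_one] at hconcave
  calc omegaK α (r + 1) / (omegaK (1 + α) (t n - t (n - 1)) * omegaK (1 + α) 1)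
      = thetaK α t n n * (Real.Gamma (1 + α) * omegaK α (r + 1)) := by
        rw [hθ₀, omegaK_one_add α 1, Real.one_rpow]
        field_simp
    _ = thetaK α t n n * (α * (r + 1) ^ (α - 1)) := by rw [Gamma_one_add_mul_omegaK hα0]
    _ < thetaK α t n n * ((r + 1) ^ α - r ^ α) := mul_lt_mul_of_pos_left hconcave hθ₀_pos
    _ = thetaK α t n n - thetaK α t n (n - 1) := by
        rw [thetaK_self_sub_thetaK_pred (by omega) hq, qK_pred_div_qK_pred_self hα0 h2 hτn.le hτn1]

theorem stmt5 (α : ℝ) (hα0 : 0 < α) (hα1 : α < 1)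
    (N : ℕ) (t : ℕ → ℝ) (ht0 : t 0 = 0) (ht : ∀ k, k < N → t k < t (k + 1)) :
    ∀ n, 2 ≤ n → n ≤ N →
      thetaK α t n n = 1 / omegaK (1 + α) (t n - t (n - 1)) ∧
      omegaK α ((t n - t (n - 1)) / (t (n - 1) - t (n - 2)) + 1)
          / (omegaK (1 + α) (t n - t (n - 1)) * omegaK (1 + α) 1)
        < thetaK α t n n - thetaK α t n (n - 1) :=
  stmt5_general α hα0 hα1 N t ht
end

section
/- For every fixed 1 ≤ n ≤ N, all the DOC kernels are strictly positive: θ_{n−k}^{(n)} > 0 for 1 ≤ k ≤ n. -/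
open Finset intervalIntegral Matrix

/-! On a strictly increasing mesh the L1_R kernels form a lower-triangular matrix with positive
diagonal and, by strict concavity of `s ↦ s ^ α`, negative off-diagonal entries. The recursion for
the DOC kernels then expresses each new kernel as a positive multiple of a sum of products of
positive earlier kernels with negative entries, so positivity propagates by strong induction. -/

theorem StrictConcaveOn.map_add_sub_map_lt {s : Set ℝ} {f : ℝ → ℝ} (hf : StrictConcaveOn ℝ s f)
    {x y d : ℝ} (hx : x ∈ s) (hyd : y + d ∈ s) (hxy : x < y) (hd : 0 < d) :
    f (y + d) - f y < f (x + d) - f x := by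
  set T := y + d - x
  have hT : 0 < T := by linarith
  have hne : x ≠ y + d := by linarith
  -- both `x + d` and `y` are interior convex combinations of `x` and `y + d`, with swapped weights
  have hw : (y - x) / T + d / T = 1 := by field_simp; ring
  have hw' : d / T + (y - x) / T = 1 := by rw [add_comm, hw]
  have h₁ := hf.2 hx hyd hne (div_pos (by linarith) hT) (div_pos hd hT) hw
  have h₂ := hf.2 hx hyd hne (div_pos hd hT) (div_pos (by linarith) hT) hw'
  simp only [smul_eq_mul] at h₁ h₂
  have e₁ : (y - x) / T * x + d / T * (y + d) = x + d := by field_simp; ring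
  have e₂ : d / T * x + (y - x) / T * (y + d) = y := by field_simp; ring
  rw [e₁] at h₁
  rw [e₂] at h₂
  have hsum : (y - x) / T * f x + d / T * f (y + d) + (d / T * f x + (y - x) / T * f (y + d))
      = f x + f (y + d) := by field_simp; ring
  linarith

theorem qK_eq {α : ℝ} (hα0 : 0 < α) (t : ℕ → ℝ) (n k : ℕ) :
    qK α t n k = ((t n - t (k - 1)) ^ α - (t n - t k) ^ α) / (α * Real.Gamma α) := by
  simp only [qK, omegaK]
  rw [intervalIntegral.integral_div,
    intervalIntegral.integral_comp_sub_left (fun x : ℝ => x ^ (α - 1)) (t n),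
    integral_rpow (Or.inl (by linarith)), sub_add_cancel]
  ring

theorem aK_self_pos {α : ℝ} (hα0 : 0 < α) {t : ℕ → ℝ} {k : ℕ} (hk : t (k - 1) < t k) :
    0 < aK α t k k := by
  rw [aK, if_pos rfl, qK_eq hα0, sub_self, Real.zero_rpow hα0.ne', sub_zero]
  exact div_pos (Real.rpow_pos_of_pos (by linarith) α)
    (mul_pos hα0 (Real.Gamma_pos_of_pos hα0))

theorem aK_neg {α : ℝ} (hα0 : 0 < α) (hα1 : α < 1) {t : ℕ → ℝ} {n k : ℕ} (hkn : k < n)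
    (hk : t (k - 1) < t k) (hkn1 : t k ≤ t (n - 1)) (hn : t (n - 1) < t n) :
    aK α t n k < 0 := by
  rw [aK, if_neg hkn.ne, qK_eq hα0, qK_eq hα0, div_sub_div_same]
  refine div_neg_of_neg_of_pos ?_ (mul_pos hα0 (Real.Gamma_pos_of_pos hα0))
  have key := (Real.strictConcaveOn_rpow hα0 hα1).map_add_sub_map_lt
    (x := t (n - 1) - t k) (y := t n - t k) (d := t k - t (k - 1))
    (by simp only [Set.mem_Ici]; linarith) (by simp only [Set.mem_Ici]; linarith)
    (by linarith) (by linarith)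
  have e₁ : t n - t k + (t k - t (k - 1)) = t n - t (k - 1) := by ring
  have e₂ : t (n - 1) - t k + (t k - t (k - 1)) = t (n - 1) - t (k - 1) := by ring
  rw [e₁, e₂] at key
  linarith

theorem thetaAux_of_le (A : ℕ → ℕ → ℝ) (n : ℕ) {M m : ℕ} (hm : m ≤ M) :
    thetaAux A n M m = thetaAux A n m m := by
  induction M with
  | zero => rw [Nat.le_zero.mp hm]
  | succ M ih =>
    rcases hm.lt_or_eq with hlt | rfl
    · rw [thetaAux, if_pos (Nat.lt_succ_iff.mp hlt), ih (Nat.lt_succ_iff.mp hlt)]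
    · rfl

theorem thetaAux_succ_self (A : ℕ → ℕ → ℝ) (n M : ℕ) :
    thetaAux A n (M + 1) (M + 1) = -(1 / A (n - (M + 1)) (n - (M + 1))) *
      ∑ ℓ ∈ range (M + 1), thetaAux A n ℓ ℓ * A (n - ℓ) (n - (M + 1)) := by
  rw [thetaAux, if_neg (by omega)]
  congr 1
  refine sum_congr rfl fun ℓ hℓ => ?_
  rw [thetaAux_of_le A n (Nat.lt_succ_iff.mp (mem_range.mp hℓ))]

theorem thetaAux_self_pos (A : ℕ → ℕ → ℝ) (n : ℕ)
    (hdiag : ∀ j, 1 ≤ j → j ≤ n → 0 < A j j)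
    (hoff : ∀ i j, 1 ≤ j → j < i → i ≤ n → A i j < 0) :
    ∀ m < n, 0 < thetaAux A n m m := by
  intro m
  induction m using Nat.strong_induction_on with
  | _ m ih =>
    intro hmn
    match m with
    | 0 => simpa [thetaAux] using hdiag n (by omega) le_rfl
    | M + 1 =>
      rw [thetaAux_succ_self, neg_mul, ← mul_neg, ← sum_neg_distrib]
      refine mul_pos (one_div_pos.mpr (hdiag _ (by omega) (by omega)))
        (sum_pos (fun ℓ hℓ => ?_) nonempty_range_add_one)
      have hℓ := mem_range.mp hℓ
      exact neg_pos.mpr (mul_neg_of_pos_of_neg (ih ℓ hℓ (by omega))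
        (hoff _ _ (by omega) (by omega) (by omega)))

theorem stmt6_general (α : ℝ) (hα0 : 0 < α) (hα1 : α < 1)
    (N : ℕ) (t : ℕ → ℝ) (ht : ∀ k, k < N → t k < t (k + 1)) :
    ∀ n k, 1 ≤ k → k ≤ n → n ≤ N → 0 < thetaK α t n k := by
  intro n k hk hkn hnN
  have hmono : StrictMonoOn t (Set.Iic N) := strictMonoOn_Iic_of_lt_succ fun m hm => by
    simpa only [Order.succ_eq_add_one] using ht m hm
  have hlt : ∀ {i j}, i < j → j ≤ N → t i < t j := fun hij hj =>
    hmono (Set.mem_Iic.mpr (by omega)) (Set.mem_Iic.mpr hj) hij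
  have hle : ∀ {i j}, i ≤ j → j ≤ N → t i ≤ t j := fun hij hj =>
    hmono.monotoneOn (Set.mem_Iic.mpr (by omega)) (Set.mem_Iic.mpr hj) hij
  exact thetaAux_self_pos _ n (fun j _ _ => aK_self_pos hα0 (hlt (by omega) (by omega)))
    (fun i j _ hji _ => aK_neg hα0 hα1 hji (hlt (by omega) (by omega)) (hle (by omega) (by omega))
      (hlt (by omega) (by omega))) _ (by omega)

theorem stmt6 (α : ℝ) (hα0 : 0 < α) (hα1 : α < 1)
    (N : ℕ) (t : ℕ → ℝ) (ht0 : t 0 = 0) (ht : ∀ k, k < N → t k < t (k + 1)) :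
    ∀ n k, 1 ≤ k → k ≤ n → n ≤ N → 0 < thetaK α t n k :=
  stmt6_general α hα0 hα1 N t ht
end
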